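/- arXiv:1105.0398 — 3 statements merged into one kernel-verified Lean document; each statement's English description precedes it below -/
import Mathlib

section
/- For every positive integer h there exists a planar bipartite adjacency instance (modeling external adjacencies between two rectangle complexes) with 4h+6 external adjacency edges such that every valid selection—i.e., every choice of an independent set in each of the two internal-adjacency outerplanar graphs—preserves at most h+6 external adjacency edges; hence at most a (1/4 + o(1)) fraction of external adjacencies can be preserved. -/
open scoped BigOperators

/-- A graph is outerplanar iff it can be drawn with all vertices placed (injectively) on the
unit circle and edges drawn as pairwise non-crossing chords: two chords of distinct edges
never meet in a point interior to both. -/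
def IsOuterplanar {V : Type} (G : SimpleGraph V) : Prop :=
  ∃ pos : V → EuclideanSpace ℝ (Fin 2),
    Function.Injective pos ∧ (∀ v : V, ‖pos v‖ = 1) ∧
    ∀ a b c d : V, G.Adj a b → G.Adj c d → ({a, b} : Set V) ≠ {c, d} →
      openSegment ℝ (pos a) (pos b) ∩ openSegment ℝ (pos c) (pos d) = ∅

/-- A maximal outerplanar graph: outerplanar, and no edge can be added while keeping the
graph outerplanar. -/
def IsMaximalOuterplanar {V : Type} (G : SimpleGraph V) : Prop :=
  IsOuterplanar G ∧ ∀ H : SimpleGraph V, G ≤ H → G ≠ H → ¬ IsOuterplanar H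

/-- An independent set of a graph. -/
def IsIndepSet {V : Type} (G : SimpleGraph V) (I : Finset V) : Prop :=
  ∀ i ∈ I, ∀ j ∈ I, ¬ G.Adj i j

/-- A graph is planar iff it has a straight-line drawing: vertices at distinct points of the
plane, edges drawn as segments, two distinct edges never crossing in a point interior to
both, and no vertex interior to an edge.  (By Fáry's theorem this characterizes planarity.) -/
def IsPlanarSL {V : Type} (G : SimpleGraph V) : Prop :=
  ∃ pos : V → EuclideanSpace ℝ (Fin 2), Function.Injective pos ∧
    (∀ a b c d : V, G.Adj a b → G.Adj c d → ({a, b} : Set V) ≠ {c, d} →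
      openSegment ℝ (pos a) (pos b) ∩ openSegment ℝ (pos c) (pos d) = ∅) ∧
    (∀ a b v : V, G.Adj a b → pos v ∉ openSegment ℝ (pos a) (pos b))

/-- The combined adjacency graph of an instance: the two internal adjacency graphs together
with the bipartite external adjacency edges. -/
def combinedGraph {α β : Type} [DecidableEq α] [DecidableEq β]
    (GT : SimpleGraph α) (GB : SimpleGraph β) (E : Finset (α × β)) :
    SimpleGraph (α ⊕ β) :=
  SimpleGraph.fromRel (fun u v =>
    match u, v with
    | .inl a, .inl a' => GT.Adj a a'
    | .inr b, .inr b' => GB.Adj b b'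
    | .inl a, .inr b => (a, b) ∈ E
    | .inr _, .inl _ => False)

/-!
Top vertices `0` and `1` are adjacent, and the bottom vertices are paired off by the internal
edges `{2k, 2k+1}`. Bottom vertex `b` is joined to top `0` if it lies in the first half and to
top `1` otherwise; six further edges join the tops `2, …, 6` to the bottoms `0` and `1`.
An independent top set contains at most one of `0` and `1`, and an independent bottom set at most
one vertex of each pair, so at most `h` of the `4h` main edges survive.

For the drawings, all vertices go on the unit circle, in an order in which no two edges
interleave. With the stereographic parametrisation, the chord between the points of parameters
`p` and `q` is the zero set of an affine function whose value at the point of parameter `s` has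
the sign of `-(s - p)(s - q)`; for non-interleaving edges this function vanishes on one chord and
has constant sign on the other.
-/

noncomputable def circlePoint (t : ℝ) : EuclideanSpace ℝ (Fin 2) :=
  !₂[(1 - t ^ 2) / (1 + t ^ 2), 2 * t / (1 + t ^ 2)]

lemma norm_circlePoint (t : ℝ) : ‖circlePoint t‖ = 1 := by
  have : (0 : ℝ) < 1 + t ^ 2 := by positivity
  rw [EuclideanSpace.norm_eq, Real.sqrt_eq_one]
  simp [circlePoint, Fin.sum_univ_two]
  field_simp
  ring

lemma circlePoint_injective : Function.Injective circlePoint := by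
  refine Function.LeftInverse.injective (g := fun v => v 1 / (1 + v 0)) fun t => ?_
  have : (0 : ℝ) < 1 + t ^ 2 := by positivity
  simp [circlePoint]
  field_simp
  ring

noncomputable def chordMap (p q : ℝ) : EuclideanSpace ℝ (Fin 2) →ᵃ[ℝ] ℝ :=
  ((1 - p * q) • EuclideanSpace.proj 0 + (p + q) • EuclideanSpace.proj 1 :
    EuclideanSpace ℝ (Fin 2) →L[ℝ] ℝ).toLinearMap.toAffineMap -
    AffineMap.const ℝ _ (1 + p * q)

lemma chordMap_circlePoint (p q s : ℝ) :
    chordMap p q (circlePoint s) = -2 * ((s - p) * (s - q)) / (1 + s ^ 2) := by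
  have : (0 : ℝ) < 1 + s ^ 2 := by positivity
  simp [chordMap, circlePoint]
  field_simp
  ring

lemma chordMap_self_left (p q : ℝ) : chordMap p q (circlePoint p) = 0 := by
  simp [chordMap_circlePoint]

lemma chordMap_self_right (p q : ℝ) : chordMap p q (circlePoint q) = 0 := by
  simp [chordMap_circlePoint]

lemma zero_notMem_openSegment {x y : ℝ} (hxy : 0 ≤ x * y) (hne : x ≠ 0 ∨ y ≠ 0) :
    (0 : ℝ) ∉ openSegment ℝ x y := by
  rintro ⟨s, t, hs, ht, hst, hzero⟩
  rw [smul_eq_mul, smul_eq_mul] at hzero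
  have hsq : 0 < s * x ^ 2 + t * y ^ 2 := by
    rcases hne with hx | hy
    · positivity
    · positivity
  have hexp : (s * x + t * y) * (x + y) = s * x ^ 2 + t * y ^ 2 + x * y := by
    linear_combination x * y * hst
  rw [hzero, zero_mul] at hexp
  linarith

section AffineSeparation

variable {E : Type*} [AddCommGroup E] [Module ℝ E] {f : E →ᵃ[ℝ] ℝ} {a b : E}

lemma openSegment_inter_eq_empty_of_affineMap (ha : f a = 0) (hb : f b = 0) {c d : E}
    (hcd : 0 ≤ f c * f d) (hne : f c ≠ 0 ∨ f d ≠ 0) :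
    openSegment ℝ a b ∩ openSegment ℝ c d = ∅ := by
  refine Set.eq_empty_of_forall_notMem fun x ⟨hxab, hxcd⟩ => ?_
  have hfx : f x ∈ openSegment ℝ (f a) (f b) := image_openSegment ℝ f a b ▸ ⟨x, hxab, rfl⟩
  rw [ha, hb, openSegment_same, Set.mem_singleton_iff] at hfx
  exact zero_notMem_openSegment hcd hne (hfx ▸ image_openSegment ℝ f c d ▸ ⟨x, hxcd, rfl⟩)

lemma notMem_openSegment_of_affineMap (ha : f a = 0) (hb : f b = 0) {v : E} (hv : f v ≠ 0) :
    v ∉ openSegment ℝ a b := fun hvab => by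
  have hfv : f v ∈ openSegment ℝ (f a) (f b) := image_openSegment ℝ f a b ▸ ⟨v, hvab, rfl⟩
  rw [ha, hb, openSegment_same] at hfv
  exact hv hfv

end AffineSeparation

def IsOnePageBookEmbedding {V : Type*} (G : SimpleGraph V) (r : V → ℕ) : Prop :=
  Function.Injective r ∧
    ∀ ⦃a b c d⦄, G.Adj a b → G.Adj c d → r a < r c → r c < r b → r a ≤ r d ∧ r d ≤ r b

namespace IsOnePageBookEmbedding

variable {V W : Type} {G : SimpleGraph V} {r : V → ℕ}

lemma comap (hG : IsOnePageBookEmbedding G r) {G' : SimpleGraph W} (f : G' ↪g G) :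
    IsOnePageBookEmbedding G' (r ∘ f) :=
  ⟨hG.1.comp f.injective, fun _ _ _ _ hab hcd =>
    hG.2 (f.map_adj_iff.2 hab) (f.map_adj_iff.2 hcd)⟩

lemma sub_mul_sub_nonpos_of_neg (hG : IsOnePageBookEmbedding G r) {a b c d : V}
    (hab : G.Adj a b) (hcd : G.Adj c d) (hc : ((r c : ℝ) - r a) * (r c - r b) < 0) :
    ((r d : ℝ) - r a) * (r d - r b) ≤ 0 := by
  rcases mul_neg_iff.1 hc with ⟨hac, hcb⟩ | ⟨hca, hbc⟩
  · obtain ⟨had, hdb⟩ := hG.2 hab hcd (by exact_mod_cast sub_pos.1 hac)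
      (by exact_mod_cast sub_neg.1 hcb)
    exact mul_nonpos_of_nonneg_of_nonpos (sub_nonneg.2 (by exact_mod_cast had))
      (sub_nonpos.2 (by exact_mod_cast hdb))
  · obtain ⟨hbd, hda⟩ := hG.2 hab.symm hcd (by exact_mod_cast sub_pos.1 hbc)
      (by exact_mod_cast sub_neg.1 hca)
    exact mul_nonpos_of_nonpos_of_nonneg (sub_nonpos.2 (by exact_mod_cast hda))
      (sub_nonneg.2 (by exact_mod_cast hbd))

lemma sub_mul_sub_mul_nonneg (hG : IsOnePageBookEmbedding G r) {a b c d : V}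
    (hab : G.Adj a b) (hcd : G.Adj c d) :
    0 ≤ ((r c : ℝ) - r a) * (r c - r b) * (((r d : ℝ) - r a) * (r d - r b)) := by
  rcases lt_or_ge (((r c : ℝ) - r a) * (r c - r b)) 0 with hc | hc
  · exact mul_nonneg_of_nonpos_of_nonpos hc.le (hG.sub_mul_sub_nonpos_of_neg hab hcd hc)
  rcases lt_or_ge (((r d : ℝ) - r a) * (r d - r b)) 0 with hd | hd
  · exact mul_nonneg_of_nonpos_of_nonpos (hG.sub_mul_sub_nonpos_of_neg hab hcd.symm hd) hd.le
  · exact mul_nonneg hc hd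

lemma chordMap_ne_zero (hG : IsOnePageBookEmbedding G r) {a b v : V} (hva : v ≠ a)
    (hvb : v ≠ b) : chordMap (r a) (r b) (circlePoint (r v)) ≠ 0 := by
  have : (0 : ℝ) < 1 + (r v : ℝ) ^ 2 := by positivity
  rw [chordMap_circlePoint]
  refine div_ne_zero (mul_ne_zero (by norm_num) (mul_ne_zero ?_ ?_)) this.ne' <;>
    rw [sub_ne_zero, Ne, Nat.cast_inj] <;> exact hG.1.ne ‹_›

lemma chords_inter_eq_empty (hG : IsOnePageBookEmbedding G r) {a b c d : V}
    (hab : G.Adj a b) (hcd : G.Adj c d) (hne : ({a, b} : Set V) ≠ {c, d}) :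
    openSegment ℝ (circlePoint (r a)) (circlePoint (r b)) ∩
      openSegment ℝ (circlePoint (r c)) (circlePoint (r d)) = ∅ := by
  refine openSegment_inter_eq_empty_of_affineMap (chordMap_self_left _ _)
    (chordMap_self_right _ _) ?_ ?_
  · rw [chordMap_circlePoint, chordMap_circlePoint, div_mul_div_comm]
    have := hG.sub_mul_sub_mul_nonneg hab hcd
    exact div_nonneg (by nlinarith) (by positivity)
  · have : c ≠ a ∧ c ≠ b ∨ d ≠ a ∧ d ≠ b := by
      by_contra! h
      exact hne (by grind [Set.pair_comm, hcd.ne])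
    exact this.imp (fun h => hG.chordMap_ne_zero h.1 h.2) fun h => hG.chordMap_ne_zero h.1 h.2

lemma notMem_chord (hG : IsOnePageBookEmbedding G r) {a b : V} (hab : G.Adj a b) (v : V) :
    circlePoint (r v) ∉ openSegment ℝ (circlePoint (r a)) (circlePoint (r b)) := by
  have hpt : circlePoint (r a) ≠ circlePoint (r b) :=
    fun h => hab.ne (hG.1 (Nat.cast_injective (circlePoint_injective h)))
  by_cases hva : v = a
  · rwa [hva, left_mem_openSegment_iff]
  by_cases hvb : v = b
  · rwa [hvb, right_mem_openSegment_iff]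
  exact notMem_openSegment_of_affineMap (chordMap_self_left _ _) (chordMap_self_right _ _)
    (hG.chordMap_ne_zero hva hvb)

lemma injective_circlePoint_comp (hG : IsOnePageBookEmbedding G r) :
    Function.Injective fun v => circlePoint (r v) :=
  circlePoint_injective.comp (Nat.cast_injective.comp hG.1)

theorem isOuterplanar (hG : IsOnePageBookEmbedding G r) : IsOuterplanar G :=
  ⟨_, hG.injective_circlePoint_comp, fun _ => norm_circlePoint _,
    fun _ _ _ _ => hG.chords_inter_eq_empty⟩

theorem isPlanarSL (hG : IsOnePageBookEmbedding G r) : IsPlanarSL G :=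
  ⟨_, hG.injective_circlePoint_comp, fun _ _ _ _ => hG.chords_inter_eq_empty,
    fun _ _ v hab => hG.notMem_chord hab v⟩

end IsOnePageBookEmbedding

section CombinedGraph

variable {α β : Type} [DecidableEq α] [DecidableEq β] {GT : SimpleGraph α} {GB : SimpleGraph β}
  {E : Finset (α × β)}

@[simp] lemma combinedGraph_adj_inl_inl {a a' : α} :
    (combinedGraph GT GB E).Adj (.inl a) (.inl a') ↔ GT.Adj a a' := by
  simp only [combinedGraph, SimpleGraph.fromRel_adj, ne_eq, Sum.inl.injEq]
  exact ⟨fun h => h.2.elim id (·.symm), fun h => ⟨h.ne, .inl h⟩⟩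

@[simp] lemma combinedGraph_adj_inr_inr {b b' : β} :
    (combinedGraph GT GB E).Adj (.inr b) (.inr b') ↔ GB.Adj b b' := by
  simp only [combinedGraph, SimpleGraph.fromRel_adj, ne_eq, Sum.inr.injEq]
  exact ⟨fun h => h.2.elim id (·.symm), fun h => ⟨h.ne, .inl h⟩⟩

@[simp] lemma combinedGraph_adj_inl_inr {a : α} {b : β} :
    (combinedGraph GT GB E).Adj (.inl a) (.inr b) ↔ (a, b) ∈ E := by
  simp [combinedGraph]

@[simp] lemma combinedGraph_adj_inr_inl {a : α} {b : β} :
    (combinedGraph GT GB E).Adj (.inr b) (.inl a) ↔ (a, b) ∈ E := by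
  simp [combinedGraph]

def combinedGraph.inlEmbedding : GT ↪g combinedGraph GT GB E :=
  ⟨⟨Sum.inl, Sum.inl_injective⟩, combinedGraph_adj_inl_inl⟩

def combinedGraph.inrEmbedding : GB ↪g combinedGraph GT GB E :=
  ⟨⟨Sum.inr, Sum.inr_injective⟩, combinedGraph_adj_inr_inr⟩

end CombinedGraph

def pairGraph (n : ℕ) : SimpleGraph (Fin n) where
  Adj i j := i ≠ j ∧ i.val / 2 = j.val / 2
  symm := ⟨fun _ _ h => ⟨h.1.symm, h.2.symm⟩⟩
  loopless := ⟨fun _ h => h.1 rfl⟩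

lemma IsIndepSet.card_filter_pairGraph_le {n : ℕ} {I : Finset (Fin n)}
    (hI : IsIndepSet (pairGraph n) I) (m k : ℕ) :
    (I.filter fun i => 2 * m ≤ i.val ∧ i.val < 2 * (m + k)).card ≤ k := by
  calc _ ≤ (Finset.Ico m (m + k)).card := by
        refine Finset.card_le_card_of_injOn (fun i => i.val / 2) (fun i hi => ?_)
          fun i hi j hj hij => ?_
        · simp only [Finset.coe_filter, Set.mem_ofPred_eq] at hi
          simp only [Finset.coe_Ico, Set.mem_Ico]
          omega
        · simp only [Finset.coe_filter, Set.mem_ofPred_eq] at hi hj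
          by_contra hne
          exact hI i hi.1 j hj.1 ⟨hne, hij⟩
    _ = k := by simp

namespace QuarterInstance

def externalEdge (h : ℕ) (hpos : 0 < h) : Fin (4 * h) ⊕ Fin 6 → Fin 7 × Fin (4 * h)
  | .inl b => (if b.val < 2 * h then 0 else 1, b)
  | .inr k => if k = 0 then (2, ⟨0, by omega⟩) else (k.succ, ⟨1, by omega⟩)

lemma externalEdge_injective (h : ℕ) (hpos : 0 < h) :
    Function.Injective (externalEdge h hpos) := by
  rintro (b | k) (b' | k') hbk <;> simp only [externalEdge] at hbk <;> split_ifs at hbk <;>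
    simp only [Prod.mk.injEq, Fin.ext_iff, Fin.val_succ, Fin.val_zero, Fin.val_one, Fin.val_two,
      Sum.inl.injEq, Sum.inr.injEq, reduceCtorEq, false_and, and_false] at * <;> omega

def externalEdges (h : ℕ) (hpos : 0 < h) : Finset (Fin 7 × Fin (4 * h)) :=
  Finset.univ.map ⟨externalEdge h hpos, externalEdge_injective h hpos⟩

lemma mem_externalEdges {h : ℕ} {hpos : 0 < h} {a : Fin 7} {b : Fin (4 * h)} :
    (a, b) ∈ externalEdges h hpos ↔ ∃ x, externalEdge h hpos x = (a, b) := by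
  simp [externalEdges]

lemma card_externalEdges (h : ℕ) (hpos : 0 < h) : (externalEdges h hpos).card = 4 * h + 6 := by
  simp [externalEdges]

abbrev graph (h : ℕ) (hpos : 0 < h) : SimpleGraph (Fin 7 ⊕ Fin (4 * h)) :=
  combinedGraph (SimpleGraph.edge 0 1) (pairGraph (4 * h)) (externalEdges h hpos)

/-- The cyclic order top `0`, bottom `0`, tops `2, …, 6`, bottoms `1, …, 4h-1`, top `1`. -/
def rank (h : ℕ) : Fin 7 ⊕ Fin (4 * h) → ℕ
  | .inl a => if a.val = 1 then 4 * h + 6 else a.val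
  | .inr b => if b.val = 0 then 1 else b.val + 6

inductive IsRankEdge (h : ℕ) : ℕ → ℕ → Prop
  | top : IsRankEdge h 0 (4 * h + 6)
  | fan_zero_first : IsRankEdge h 0 1
  | fan_zero {y : ℕ} : 7 ≤ y → y ≤ 2 * h + 5 → IsRankEdge h 0 y
  | fan_one {x : ℕ} : 2 * h + 6 ≤ x → x ≤ 4 * h + 5 → IsRankEdge h x (4 * h + 6)
  | pair_first : IsRankEdge h 1 7
  | pair {x : ℕ} : 8 ≤ x → x % 2 = 0 → x + 1 ≤ 4 * h + 5 → IsRankEdge h x (x + 1)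
  | extra_first : IsRankEdge h 1 2
  | extra {x : ℕ} : 2 ≤ x → x ≤ 6 → IsRankEdge h x 7

lemma IsRankEdge.not_interleave {h x y z w : ℕ} (hpos : 0 < h)
    (hxy : IsRankEdge h x y ∨ IsRankEdge h y x) (hzw : IsRankEdge h z w ∨ IsRankEdge h w z)
    (hxz : x < z) (hzy : z < y) : x ≤ w ∧ w ≤ y := by
  rcases hxy with e | e <;> rcases hzw with f | f <;> cases e <;> cases f <;> omega

lemma isRankEdge_externalEdge {h : ℕ} (hpos : 0 < h) (x : Fin (4 * h) ⊕ Fin 6) :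
    IsRankEdge h (rank h (.inl (externalEdge h hpos x).1))
        (rank h (.inr (externalEdge h hpos x).2)) ∨
      IsRankEdge h (rank h (.inr (externalEdge h hpos x).2))
        (rank h (.inl (externalEdge h hpos x).1)) := by
  rcases x with b | k <;> simp only [externalEdge]
  · split_ifs with hb
    · by_cases hb0 : b.val = 0
      · simpa [rank, hb0] using .inl .fan_zero_first
      · simpa [rank, hb0] using .inl (.fan_zero (by omega) (by omega))
    · have hb0 : b.val ≠ 0 := by omega
      simpa [rank, hb0] using .inr (.fan_one (by omega) (by omega))
  · split_ifs with hk
    · simpa [rank] using .inr .extra_first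
    · have hk0 : k.val ≠ 0 := Fin.val_ne_of_ne hk
      simpa [rank, hk] using .inl (.extra (by omega) (by omega))

lemma isRankEdge_of_pairGraph_adj {h : ℕ} {b b' : Fin (4 * h)} (hlt : b.val < b'.val)
    (hbb : b.val / 2 = b'.val / 2) : IsRankEdge h (rank h (.inr b)) (rank h (.inr b')) := by
  have hb' : b'.val = b.val + 1 := by omega
  by_cases hb0 : b.val = 0
  · simpa [rank, hb0, hb'] using .pair_first
  · have hrank : b'.val + 6 = b.val + 6 + 1 := by omega
    simpa [rank, hb0, hb', hrank] using .pair (by omega) (by omega) (by omega)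

lemma isRankEdge_of_adj {h : ℕ} {hpos : 0 < h} {u v : Fin 7 ⊕ Fin (4 * h)}
    (huv : (graph h hpos).Adj u v) :
    IsRankEdge h (rank h u) (rank h v) ∨ IsRankEdge h (rank h v) (rank h u) := by
  rcases u with a | b <;> rcases v with a' | b'
  · obtain ⟨⟨rfl, rfl⟩ | ⟨rfl, rfl⟩, -⟩ :=
      (SimpleGraph.edge_adj ..).1 (combinedGraph_adj_inl_inl.1 huv)
    · exact .inl .top
    · exact .inr .top
  · obtain ⟨x, hx⟩ := mem_externalEdges.1 (combinedGraph_adj_inl_inr.1 huv)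
    simpa only [hx] using isRankEdge_externalEdge hpos x
  · obtain ⟨x, hx⟩ := mem_externalEdges.1 (combinedGraph_adj_inr_inl.1 huv)
    simpa only [hx] using (isRankEdge_externalEdge hpos x).symm
  · obtain ⟨hne, hbb⟩ := combinedGraph_adj_inr_inr.1 huv
    rcases lt_or_gt_of_ne (Fin.val_ne_of_ne hne) with hlt | hlt
    · exact .inl (isRankEdge_of_pairGraph_adj hlt hbb)
    · exact .inr (isRankEdge_of_pairGraph_adj hlt hbb.symm)

theorem isOnePageBookEmbedding_graph (h : ℕ) (hpos : 0 < h) :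
    IsOnePageBookEmbedding (graph h hpos) (rank h) := by
  refine ⟨?_, fun a b c d hab hcd hac hcb => ?_⟩
  · rintro (a | b) (a' | b') e <;> simp only [rank] at e <;> split_ifs at e <;>
      simp only [Sum.inl.injEq, Sum.inr.injEq, reduceCtorEq, Fin.ext_iff] <;> omega
  · exact IsRankEdge.not_interleave hpos (isRankEdge_of_adj hab) (isRankEdge_of_adj hcd) hac hcb

lemma card_main_preserved_le {h : ℕ} {IT : Finset (Fin 7)} {IB : Finset (Fin (4 * h))}
    (hIT : IsIndepSet (SimpleGraph.edge 0 1) IT) (hIB : IsIndepSet (pairGraph (4 * h)) IB) :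
    (Finset.univ.filter fun b : Fin (4 * h) =>
      (if b.val < 2 * h then 0 else 1) ∈ IT ∧ b ∈ IB).card ≤ h := by
  have hside : (0 : Fin 7) ∉ IT ∨ (1 : Fin 7) ∉ IT := by
    by_contra! h01
    exact hIT 0 h01.1 1 h01.2 ((SimpleGraph.edge_adj ..).2 ⟨.inl ⟨rfl, rfl⟩, by decide⟩)
  rcases hside with h0 | h1
  · refine le_trans (Finset.card_le_card fun b hb => ?_) (hIB.card_filter_pairGraph_le h h)
    simp only [Finset.mem_filter, Finset.mem_univ, true_and] at hb ⊢
    split_ifs at hb with hb2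
    · exact absurd hb.1 h0
    · exact ⟨hb.2, by omega, by omega⟩
  · refine le_trans (Finset.card_le_card fun b hb => ?_) (hIB.card_filter_pairGraph_le 0 h)
    simp only [Finset.mem_filter, Finset.mem_univ, true_and] at hb ⊢
    split_ifs at hb with hb2
    · exact ⟨hb.2, by omega, by omega⟩
    · exact absurd hb.1 h1

lemma card_preserved_le {h : ℕ} (hpos : 0 < h) {IT : Finset (Fin 7)} {IB : Finset (Fin (4 * h))}
    (hIT : IsIndepSet (SimpleGraph.edge 0 1) IT) (hIB : IsIndepSet (pairGraph (4 * h)) IB) :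
    ((externalEdges h hpos).filter fun e => e.1 ∈ IT ∧ e.2 ∈ IB).card ≤ h + 6 := by
  rw [externalEdges, Finset.filter_map, Finset.card_map]
  calc _ ≤ ((Finset.univ.filter fun b : Fin (4 * h) =>
          (if b.val < 2 * h then 0 else 1) ∈ IT ∧ b ∈ IB).disjSum
            (Finset.univ : Finset (Fin 6))).card := by
        refine Finset.card_le_card ?_
        rintro (b | k) hx
        · simpa [externalEdge] using hx
        · simp
    _ ≤ h + 6 := by
        rw [Finset.card_disjSum, Finset.card_univ, Fintype.card_fin]
        exact Nat.add_le_add_right (card_main_preserved_le hIT hIB) 6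

end QuarterInstance

/-- For every `h > 0` there is a planar bipartite adjacency instance,
with a top side of `7` vertices and a bottom side of `4h` vertices, having `4h + 6`
external adjacency edges, whose internal adjacency graphs are outerplanar, such that every
valid selection (an independent set in the internal adjacency graph of each side) preserves
at most `h + 6` external adjacency edges — i.e. at most a `1/4 + o(1)` fraction. -/
theorem upper_bound_quarter (h : ℕ) (hpos : 0 < h) :
    ∃ (GT : SimpleGraph (Fin 7)) (GB : SimpleGraph (Fin (4 * h)))
      (E : Finset (Fin 7 × Fin (4 * h))),
      IsOuterplanar GT ∧ IsOuterplanar GB ∧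
      IsPlanarSL (combinedGraph GT GB E) ∧
      E.card = 4 * h + 6 ∧
      ∀ (IT : Finset (Fin 7)) (IB : Finset (Fin (4 * h))),
        IsIndepSet GT IT → IsIndepSet GB IB →
        (E.filter (fun e => e.1 ∈ IT ∧ e.2 ∈ IB)).card ≤ h + 6 := by
  have hbook := QuarterInstance.isOnePageBookEmbedding_graph h hpos
  exact ⟨_, _, QuarterInstance.externalEdges h hpos,
    (hbook.comap combinedGraph.inlEmbedding).isOuterplanar,
    (hbook.comap combinedGraph.inrEmbedding).isOuterplanar, hbook.isPlanarSL,
    QuarterInstance.card_externalEdges h hpos, fun _ _ => QuarterInstance.card_preserved_le hpos⟩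
end

section
/- In a finite distributive lattice of regular edge labelings (equivalently, equivalence classes of rectangular layouts with a fixed extended dual graph) ordered by flip moves, for each flippable item x and each layout L, the number of times x is flipped counterclockwise is the same along every path in the flip graph from the minimal element to L; i.e., the flipping number f_x(L) is well-defined. -/
/-- `l` is the sequence of labels of the cover-chain `c` in a lattice: the `k`-th label is a
join-irreducible element witnessing the `k`-th cover step of `c` (it is below the upper
element of the step but not below the lower one).  In the lattice of regular edge labelings,
the cover steps are the flip moves, and such a label `(x, i)` records which flippable item
`x` is flipped (for the `i`-th time) at this step. -/
def LabelsOf {D : Type} [Lattice D] (c l : List D) : Prop :=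
  l.length + 1 = c.length ∧
  ∀ k : ℕ, k + 1 < c.length →
    ∃ p a b : D, l[k]? = some p ∧ (c)[k]? = some a ∧ (c)[k + 1]? = some b ∧
      SupIrred p ∧ p ≤ b ∧ ¬ p ≤ a

/-- `c` is a maximal chain from `⊥` to `L`: a list starting at `⊥`, ending at `L`, each
element covered by the next (i.e. a path of flip moves from the minimal element to `L`). -/
def IsCoverChain {D : Type} [Lattice D] [OrderBot D] (L : D) (c : List D) : Prop :=
  c.head? = some ⊥ ∧ c.getLast? = some L ∧ c.Chain' (· ⋖ ·)

/-! In a distributive lattice a sup-irreducible `p` is sup-prime, so if `p` and `q` both label a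
cover step `a ⋖ b` then `p ≤ b = a ⊔ q` forces `p ≤ q`: each cover step has a unique label.
Hence along a maximal chain from `a` to `L` every sup-irreducible of the interval `(a, L]`
appears exactly once as a label (at the first step whose top lies above it), so the label
lists of any two maximal chains from `⊥` to `L` are permutations of each other, and any
classification `π` of the labels counts every class equally often. -/

theorem CovBy.sup_eq_of_not_le {D : Type*} [Lattice D] {a b q : D} (hab : a ⋖ b)
    (hqb : q ≤ b) (hqa : ¬ q ≤ a) : a ⊔ q = b :=
  (sup_le hab.le hqb).eq_of_not_lt fun h => hab.2 (left_lt_sup.2 hqa) h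

theorem CovBy.supIrred_eq_of_le_of_not_le {D : Type*} [DistribLattice D] {a b p q : D}
    (hab : a ⋖ b) (hp : SupIrred p) (hpb : p ≤ b) (hpa : ¬ p ≤ a)
    (hq : SupIrred q) (hqb : q ≤ b) (hqa : ¬ q ≤ a) : p = q := by
  have key : ∀ {p q : D}, SupIrred p → p ≤ b → ¬ p ≤ a → q ≤ b → ¬ q ≤ a → p ≤ q :=
    fun hp hpb hpa hqb hqa =>
      (hp.supPrime.le_sup.1 (hab.sup_eq_of_not_le hqb hqa ▸ hpb)).resolve_left hpa
  exact (key hp hpb hpa hqb hqa).antisymm (key hq hqb hqa hpb hpa)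

theorem List.IsChain.le_of_getLast?_eq {D : Type*} [Preorder D] {a L : D} {c : List D}
    (hc : (a :: c).IsChain (· ⋖ ·)) (hL : (a :: c).getLast? = some L) : a ≤ L := by
  induction c generalizing a with
  | nil => simp_all
  | cons b c ih =>
    rw [List.isChain_cons_cons] at hc
    rw [List.getLast?_cons_cons] at hL
    exact hc.1.le.trans (ih hc.2 hL)

namespace LabelsOf

section Lattice

variable {D : Type} [Lattice D] {a b p : D} {c l : List D}

theorem singleton_iff : LabelsOf [a] l ↔ l = [] := by
  simp [LabelsOf]

theorem cons_cons_iff :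
    LabelsOf (a :: b :: c) (p :: l) ↔
      (SupIrred p ∧ p ≤ b ∧ ¬ p ≤ a) ∧ LabelsOf (b :: c) l := by
  unfold LabelsOf
  rw [← Nat.and_forall_add_one]
  simp [and_left_comm]

end Lattice

variable {D : Type} [DistribLattice D] {a L : D}

theorem nodup_and_mem_iff {c l : List D} (hc : (a :: c).IsChain (· ⋖ ·))
    (hL : (a :: c).getLast? = some L) (hl : LabelsOf (a :: c) l) :
    l.Nodup ∧ ∀ d, d ∈ l ↔ SupIrred d ∧ d ≤ L ∧ ¬ d ≤ a := by
  induction c generalizing a l with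
  | nil =>
    obtain rfl := singleton_iff.1 hl
    obtain rfl : a = L := by simpa using hL
    simp
  | cons b c ih =>
    cases l with
    | nil => exact absurd hl.1 (by simp)
    | cons p l =>
      obtain ⟨⟨hp, hpb, hpa⟩, hl⟩ := cons_cons_iff.1 hl
      rw [List.isChain_cons_cons] at hc
      rw [List.getLast?_cons_cons] at hL
      obtain ⟨hnodup, hmem⟩ := ih hc.2 hL hl
      refine ⟨List.nodup_cons.2 ⟨fun h => ((hmem p).1 h).2.2 hpb, hnodup⟩, fun d => ?_⟩
      rw [List.mem_cons, hmem]
      constructor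
      · rintro (rfl | ⟨hd, hdL, hdb⟩)
        · exact ⟨hp, hpb.trans (hc.2.le_of_getLast?_eq hL), hpa⟩
        · exact ⟨hd, hdL, fun hda => hdb (hda.trans hc.1.le)⟩
      · rintro ⟨hd, hdL, hda⟩
        by_cases hdb : d ≤ b
        · exact Or.inl (hc.1.supIrred_eq_of_le_of_not_le hd hdb hda hp hpb hpa)
        · exact Or.inr ⟨hd, hdL, hdb⟩

theorem perm {c₁ c₂ l₁ l₂ : List D} (hl₁ : LabelsOf c₁ l₁) (hl₂ : LabelsOf c₂ l₂)
    (hc₁ : c₁.IsChain (· ⋖ ·)) (hc₂ : c₂.IsChain (· ⋖ ·))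
    (ha₁ : c₁.head? = some a) (ha₂ : c₂.head? = some a)
    (hL₁ : c₁.getLast? = some L) (hL₂ : c₂.getLast? = some L) : l₁.Perm l₂ := by
  obtain ⟨t₁, rfl⟩ := List.head?_eq_some_iff.1 ha₁
  obtain ⟨t₂, rfl⟩ := List.head?_eq_some_iff.1 ha₂
  obtain ⟨hn₁, hm₁⟩ := nodup_and_mem_iff hc₁ hL₁ hl₁
  obtain ⟨hn₂, hm₂⟩ := nodup_and_mem_iff hc₂ hL₂ hl₂
  exact (List.perm_ext_iff_of_nodup hn₁ hn₂).2 fun d => (hm₁ d).trans (hm₂ d).symm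

end LabelsOf

theorem flipping_number_well_defined_general {D X : Type} [DistribLattice D]
    [OrderBot D] [DecidableEq X] (π : D → X) (L : D)
    (c₁ c₂ l₁ l₂ : List D)
    (hc₁ : IsCoverChain L c₁) (hc₂ : IsCoverChain L c₂)
    (hl₁ : LabelsOf c₁ l₁) (hl₂ : LabelsOf c₂ l₂) :
    ∀ x : X, (l₁.map π).count x = (l₂.map π).count x := by
  obtain ⟨hbot₁, hL₁, hch₁⟩ := hc₁
  obtain ⟨hbot₂, hL₂, hch₂⟩ := hc₂
  exact ((hl₁.perm hl₂ hch₁ hch₂ hbot₁ hbot₂ hL₁ hL₂).map π).count_eq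

/-- In a finite distributive lattice (such as the lattice of regular edge
labelings of a fixed extended dual graph, ordered by flip moves), classify the labels of
cover steps by a map `π` into flippable items.  Then for every element `L` and every two
maximal chains from the minimal element to `L`, each item `x` is flipped the same number of
times along both chains: the flipping number `f_x(L)` is well-defined, independent of the
chosen path. -/
theorem flipping_number_well_defined {D X : Type} [DistribLattice D] [Fintype D]
    [OrderBot D] [DecidableEq X] (π : D → X) (L : D)
    (c₁ c₂ l₁ l₂ : List D)
    (hc₁ : IsCoverChain L c₁) (hc₂ : IsCoverChain L c₂)
    (hl₁ : LabelsOf c₁ l₁) (hl₂ : LabelsOf c₂ l₂) :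
    ∀ x : X, (l₁.map π).count x = (l₂.map π).count x :=
  flipping_number_well_defined_general π L c₁ c₂ l₁ l₂ hc₁ hc₂ hl₁ hl₂
end

section
/- Consider selecting which boundary cells to keep on each maximal horizontal line segment and each maximal vertical line segment of a rectangular global layout, where selections on horizontal segments are mutually independent and likewise for vertical segments, but horizontal and vertical selections may conflict. Solving the selection problem optimally on only the horizontal segments (or only the vertical ones), whichever class carries more total preservable adjacencies, loses at most a factor 2; combined with a 1/3-approximation per segment (via weighted independent sets in outerplanar graphs on both sides), this yields an algorithm preserving at least 1/18 of all external bottom-level adjacencies and achieving a 1/6-approximation of the optimum. -/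
open scoped BigOperators Classical

variable {E : Type} [Fintype E] [DecidableEq E]

/-- The external bottom-level adjacencies assigned to a given segment. -/
def segAdjacencies (seg : E → ℕ ⊕ ℕ) (s : ℕ ⊕ ℕ) : Finset E :=
  Finset.univ.filter (fun e => seg e = s)

/-- Abstract form of the segment-based selection problem.  `E` is the set
of external bottom-level adjacencies; every adjacency is assigned by `seg` to exactly one
maximal horizontal (`Sum.inl`) or vertical (`Sum.inr`) boundary segment of the rectangular
global layout.  `Feas S` says that the set `S` of adjacencies can be simultaneously
preserved.  Assume:
* feasibility is closed under taking subsets;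
* selections on distinct horizontal segments are mutually independent: a union of feasible
  per-horizontal-segment selections is feasible; likewise for vertical segments;
* on each single segment the problem admits a solution preserving at least 1/9 of that
  segment's adjacencies which is simultaneously a 1/3-approximation of the best feasible
  selection on that segment (obtained via weighted independent sets in the outerplanar
  internal-adjacency graphs of the two sides of the segment).

Then there is a feasible selection preserving at least 1/18 of all external adjacencies
which is a 1/6-approximation of the optimum. -/
theorem segment_selection_one_sixth_approximation
    (seg : E → ℕ ⊕ ℕ) (Feas : Finset E → Prop)
    (hmono : ∀ S T : Finset E, T ⊆ S → Feas S → Feas T)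
    (hH : ∀ choice : ℕ → Finset E,
      (∀ k : ℕ, choice k ⊆ segAdjacencies seg (Sum.inl k) ∧ Feas (choice k)) →
      Feas (Finset.univ.filter (fun e => ∃ k, e ∈ choice k)))
    (hV : ∀ choice : ℕ → Finset E,
      (∀ k : ℕ, choice k ⊆ segAdjacencies seg (Sum.inr k) ∧ Feas (choice k)) →
      Feas (Finset.univ.filter (fun e => ∃ k, e ∈ choice k)))
    (hseg : ∀ s : ℕ ⊕ ℕ, ∃ A : Finset E, A ⊆ segAdjacencies seg s ∧ Feas A ∧
      (segAdjacencies seg s).card ≤ 9 * A.card ∧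
      ∀ B : Finset E, B ⊆ segAdjacencies seg s → Feas B → B.card ≤ 3 * A.card) :
    ∃ S : Finset E, Feas S ∧
      Fintype.card E ≤ 18 * S.card ∧
      ∀ T : Finset E, Feas T → T.card ≤ 6 * S.card := by

  classical
  choose A hAsub hAfeas hA9 hA3 using hseg
  set T : Finset (ℕ ⊕ ℕ) := Finset.univ.image seg with hT
  have hsegmem : ∀ e : E, seg e ∈ T := fun e =>
    Finset.mem_image_of_mem seg (Finset.mem_univ e)
  have hmemAdj : ∀ (e : E) (s : ℕ ⊕ ℕ), e ∈ segAdjacencies seg s ↔ seg e = s := by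
    intro e s; simp [segAdjacencies]
  have hdisjAdj : ∀ s s' : ℕ ⊕ ℕ, s ≠ s' →
      Disjoint (segAdjacencies seg s) (segAdjacencies seg s') := by
    intro s s' h
    refine Finset.disjoint_left.2 ?_
    intro e he he'
    exact h (((hmemAdj e s).1 he).symm.trans ((hmemAdj e s').1 he'))
  have hdisjA : ∀ s ∈ T, ∀ s' ∈ T, s ≠ s' → Disjoint (A s) (A s') := by
    intro s _ s' _ h
    exact (hdisjAdj s s' h).mono (hAsub s) (hAsub s')
  -- the two candidate solutions
  set SH : Finset E := Finset.univ.filter (fun e => ∃ k, e ∈ A (Sum.inl k)) with hSH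
  set SV : Finset E := Finset.univ.filter (fun e => ∃ k, e ∈ A (Sum.inr k)) with hSV
  have hSHfeas : Feas SH := hH (fun k => A (Sum.inl k)) (fun k => ⟨hAsub _, hAfeas _⟩)
  have hSVfeas : Feas SV := hV (fun k => A (Sum.inr k)) (fun k => ⟨hAsub _, hAfeas _⟩)
  -- SH as a disjoint union
  have hSHeq : SH = (T.filter (fun s => s.isLeft)).biUnion A := by
    ext e
    simp only [hSH, Finset.mem_filter, Finset.mem_univ, true_and, Finset.mem_biUnion]
    constructor
    · rintro ⟨k, hk⟩
      have hs : seg e = Sum.inl k := (hmemAdj e _).1 (hAsub _ hk)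
      exact ⟨Sum.inl k, ⟨hs ▸ hsegmem e, rfl⟩, hk⟩
    · rintro ⟨s, hs, he⟩
      obtain ⟨k, rfl⟩ := Sum.isLeft_iff.1 hs.2
      exact ⟨k, he⟩
  have hSVeq : SV = (T.filter (fun s => s.isRight)).biUnion A := by
    ext e
    simp only [hSV, Finset.mem_filter, Finset.mem_univ, true_and, Finset.mem_biUnion]
    constructor
    · rintro ⟨k, hk⟩
      have hs : seg e = Sum.inr k := (hmemAdj e _).1 (hAsub _ hk)
      exact ⟨Sum.inr k, ⟨hs ▸ hsegmem e, rfl⟩, hk⟩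
    · rintro ⟨s, hs, he⟩
      obtain ⟨k, rfl⟩ := Sum.isRight_iff.1 hs.2
      exact ⟨k, he⟩
  have hSHcard : SH.card = ∑ s ∈ T.filter (fun s => s.isLeft), (A s).card := by
    rw [hSHeq]
    exact Finset.card_biUnion (fun s hs s' hs' h =>
      hdisjA s (Finset.mem_of_mem_filter s hs) s' (Finset.mem_of_mem_filter s' hs') h)
  have hSVcard : SV.card = ∑ s ∈ T.filter (fun s => s.isRight), (A s).card := by
    rw [hSVeq]
    exact Finset.card_biUnion (fun s hs s' hs' h =>
      hdisjA s (Finset.mem_of_mem_filter s hs) s' (Finset.mem_of_mem_filter s' hs') h)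
  have hsplit : ∑ s ∈ T, (A s).card = SH.card + SV.card := by
    rw [hSHcard, hSVcard]
    rw [← Finset.sum_filter_add_sum_filter_not T (fun s => s.isLeft)]
    congr 1
    apply Finset.sum_congr _ (fun _ _ => rfl)
    apply Finset.filter_congr
    intro s _
    simp [Sum.not_isLeft]
  -- total count
  have huniv : (Finset.univ : Finset E) = T.biUnion (segAdjacencies seg) := by
    ext e
    simp only [Finset.mem_univ, true_iff, Finset.mem_biUnion]
    exact ⟨seg e, hsegmem e, (hmemAdj e _).2 rfl⟩
  have hcardE : Fintype.card E = ∑ s ∈ T, (segAdjacencies seg s).card := by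
    rw [Fintype.card, huniv]
    exact Finset.card_biUnion (fun s _ s' _ h => hdisjAdj s s' h)
  have hlow : Fintype.card E ≤ 9 * (SH.card + SV.card) := by
    rw [hcardE, ← hsplit, Finset.mul_sum]
    exact Finset.sum_le_sum (fun s _ => hA9 s)
  -- upper bound for any feasible set
  have hupp : ∀ B : Finset E, Feas B → B.card ≤ 3 * (SH.card + SV.card) := by
    intro B hB
    have hBeq : B = T.biUnion (fun s => B ∩ segAdjacencies seg s) := by
      ext e
      simp only [Finset.mem_biUnion, Finset.mem_inter]
      constructor
      · intro he
        exact ⟨seg e, hsegmem e, he, (hmemAdj e _).2 rfl⟩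
      · rintro ⟨s, _, he, _⟩
        exact he
    have hBcard : B.card = ∑ s ∈ T, (B ∩ segAdjacencies seg s).card := by
      nth_rewrite 1 [hBeq]
      apply Finset.card_biUnion
      intro s _ s' _ h
      exact (hdisjAdj s s' h).mono Finset.inter_subset_right Finset.inter_subset_right
    rw [hBcard, ← hsplit, Finset.mul_sum]
    refine Finset.sum_le_sum (fun s _ => ?_)
    exact hA3 s _ Finset.inter_subset_right
      (hmono B _ Finset.inter_subset_left hB)
  rcases le_total SV.card SH.card with h | h
  · refine ⟨SH, hSHfeas, by omega, fun B hB => ?_⟩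
    have := hupp B hB; omega
  · refine ⟨SV, hSVfeas, by omega, fun B hB => ?_⟩
    have := hupp B hB; omega
end
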